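/- Let n = 2, let L_1 be a nonzero real number and set L_2 = 2L_1. With the anisotropic Heisenberg vector fields X_1, X_2, X_3, X_4 on ℝ^5, define B = |L_1|((1/2)x_1² + x_2² + (1/2)x_3² + x_4²), A = |L_1|(x_1² + x_2² + x_3² + x_4²), and N = (B² + t²)^{1/8} (A − B + √(B² + t²))^{3/8} / (B + √(B² + t²))^{1/8}. Then N is NOT infinite-harmonic on ℝ^5 \ {0}: there exists a point p ∈ ℝ^5 \ {0} at which Δ_∞ N(p) = Σ_{i,j=1}^{4} X_i(X_j N)(p) · X_i N(p) · X_j N(p) ≠ 0. -/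

import Mathlib

/-- Partial derivative of `f : ℝ^m → ℝ` in the `i`-th coordinate direction. -/
noncomputable def pderiv' {m : ℕ} (i : Fin m) (f : (Fin m → ℝ) → ℝ) (q : Fin m → ℝ) : ℝ :=
  fderiv ℝ f q (Pi.single i 1)

/-- The anisotropic Heisenberg vector fields on ℝ^{2n+1}. -/
noncomputable def X (n : ℕ) (L : Fin n → ℝ) (j : Fin (2*n))
    (f : (Fin (2*n+1) → ℝ) → ℝ) (q : Fin (2*n+1) → ℝ) : ℝ :=
  pderiv' ⟨(j : ℕ), by have := j.isLt; omega⟩ f q +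
    (if h : (j : ℕ) < n then
        -(L ⟨(j : ℕ), h⟩) * q ⟨(j : ℕ) + n, by have := j.isLt; omega⟩
      else
        (L ⟨(j : ℕ) - n, by have := j.isLt; omega⟩) * q ⟨(j : ℕ) - n, by have := j.isLt; omega⟩) *
      pderiv' ⟨2*n, by omega⟩ f q

/-- `B = |L₁| ((1/2)x₁² + x₂² + (1/2)x₃² + x₄²)`. -/
noncomputable def Bfun (L₁ : ℝ) (q : Fin (2*2+1) → ℝ) : ℝ :=
  |L₁| * ((1/2) * (q 0)^2 + (q 1)^2 + (1/2) * (q 2)^2 + (q 3)^2)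

/-- `A = |L₁| (x₁² + x₂² + x₃² + x₄²)`. -/
noncomputable def Afun (L₁ : ℝ) (q : Fin (2*2+1) → ℝ) : ℝ :=
  |L₁| * ((q 0)^2 + (q 1)^2 + (q 2)^2 + (q 3)^2)

/-- `N = (B² + t²)^{1/8} (A − B + √(B² + t²))^{3/8} / (B + √(B² + t²))^{1/8}`. -/
noncomputable def Nfun (L₁ : ℝ) (q : Fin (2*2+1) → ℝ) : ℝ :=
  ((Bfun L₁ q)^2 + (q 4)^2) ^ ((1:ℝ)/8) *
    (Afun L₁ q - Bfun L₁ q + Real.sqrt ((Bfun L₁ q)^2 + (q 4)^2)) ^ ((3:ℝ)/8) /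
      (Bfun L₁ q + Real.sqrt ((Bfun L₁ q)^2 + (q 4)^2)) ^ ((1:ℝ)/8)

/-! At `p = (1, 1, 0, 0, 0)` we have `x₃ = x₄ = 0`, and since `N` depends on every coordinate
only through its square, `∂N/∂x₃`, `∂N/∂x₄` and `∂N/∂t` vanish at `p`. Hence at `p` the fields
`X_j` reduce to Euclidean partial derivatives up to second order, and
`Δ_∞ N(p) = D²N(p)(∇N(p), ∇N(p))`. On `{t = 0}` one has `√(B² + t²) = B`, so there
`N = (B/2)^{1/8} A^{3/8}`; along lines through `p` in the `(x₁, x₂)`-plane `B` and `A` are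
quadratic polynomials, and differentiating gives `∇N(p) = N(p)/24 · (11, 13, 0, 0, 0)` and
`D²N(p)(w, w) = 137/144 · N(p)` for `w = (11, 13, 0, 0, 0)`. -/

open Filter Topology

section LineDerivative

variable {E F : Type*} [NormedAddCommGroup E] [NormedSpace ℝ E]
  [NormedAddCommGroup F] [NormedSpace ℝ F] {f g : E → F} {x v : E}

lemma fderiv_apply_eq_of_eqOn_line (hf : DifferentiableAt ℝ f x) (hg : DifferentiableAt ℝ g x)
    (h : ∀ s : ℝ, f (x + s • v) = g (x + s • v)) : fderiv ℝ f x v = fderiv ℝ g x v := by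
  have hg' := hg.hasFDerivAt.hasLineDerivAt v
  simp only [HasLineDerivAt, ← h] at hg'
  exact (hf.hasFDerivAt.hasLineDerivAt v).unique hg'

lemma fderiv_apply_eq_zero_of_even (hf : DifferentiableAt ℝ f x)
    (h : ∀ s : ℝ, f (x + s • v) = f (x - s • v)) : fderiv ℝ f x v = 0 := by
  have hneg := hf.hasFDerivAt.hasLineDerivAt (-v)
  simp only [HasLineDerivAt, smul_neg, ← sub_eq_add_neg, ← h, map_neg] at hneg
  have hv : fderiv ℝ f x v = -fderiv ℝ f x v := (hf.hasFDerivAt.hasLineDerivAt v).unique hneg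
  have h2v : (2:ℝ) • fderiv ℝ f x v = 0 := by rw [two_smul]; exact eq_neg_iff_add_eq_zero.mp hv
  exact (smul_eq_zero.mp h2v).resolve_left two_ne_zero

lemma fderiv_fderiv_apply_eq_of_hasDerivAt {ψ' : ℝ → F} {c : F} (hf : ContDiffAt ℝ 2 f x)
    (hψ' : ∀ᶠ s in 𝓝 0, HasDerivAt (fun r : ℝ => f (x + r • v)) (ψ' s) s)
    (hc : HasDerivAt ψ' c 0) : fderiv ℝ (fderiv ℝ f) x v v = c := by
  have hline : ∀ s : ℝ, HasDerivAt (fun r : ℝ => x + r • v) v s := fun s => by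
    simpa using ((hasDerivAt_id s).smul_const v).const_add x
  have hdiff : ∀ᶠ s in 𝓝 (0:ℝ), DifferentiableAt ℝ f (x + s • v) := by
    have hcont : Tendsto (fun r : ℝ => x + r • v) (𝓝 0) (𝓝 x) := by
      simpa using (hline 0).continuousAt.tendsto
    exact hcont.eventually
      ((hf.eventually (by simp)).mono fun y hy => hy.differentiableAt (by simp))
  have hψ'_eq : ψ' =ᶠ[𝓝 0] fun s => fderiv ℝ f (x + s • v) v := by
    filter_upwards [hψ', hdiff] with s hs hfs
    exact hs.unique (hfs.hasFDerivAt.comp_hasDerivAt s (hline s))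
  have hD : DifferentiableAt ℝ (fderiv ℝ f) x :=
    (hf.fderiv_right (m := 1) (by norm_num)).differentiableAt (by simp)
  have h2 : HasDerivAt (fun s : ℝ => fderiv ℝ f (x + s • v) v) (fderiv ℝ (fderiv ℝ f) x v v) 0 := by
    have := (hD.hasFDerivAt.comp_hasDerivAt_of_eq 0 (hline 0) (by simp)).clm_apply
      (hasDerivAt_const 0 v)
    simpa using this
  have h3 : HasDerivAt (fun s : ℝ => fderiv ℝ f (x + s • v) v) c 0 :=
    hc.congr_of_eventuallyEq hψ'_eq.symm
  exact h2.unique h3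

end LineDerivative

section HeisenbergFields

variable {n : ℕ} {L : Fin n → ℝ} {f : (Fin (2*n+1) → ℝ) → ℝ} {q : Fin (2*n+1) → ℝ}

noncomputable def infLaplacian (n : ℕ) (L : Fin n → ℝ) (f : (Fin (2*n+1) → ℝ) → ℝ)
    (q : Fin (2*n+1) → ℝ) : ℝ :=
  ∑ i : Fin (2*n), ∑ j : Fin (2*n), X n L i (X n L j f) q * X n L i f q * X n L j f q

lemma X_apply_of_pderiv'_last_eq_zero (j : Fin (2*n)) (h : pderiv' (Fin.last (2*n)) f q = 0) :
    X n L j f q = pderiv' j.castSucc f q := by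
  have h' : pderiv' ⟨2*n, by omega⟩ f q = 0 := h
  simp only [X, h', mul_zero, add_zero]
  rfl

lemma X_apply_of_lt {j : Fin (2*n)} (hj : (j : ℕ) < n) (hq : q ⟨j + n, by omega⟩ = 0) :
    X n L j f q = pderiv' j.castSucc f q := by
  simp only [X, dif_pos hj, hq, mul_zero, zero_mul, add_zero]
  rfl

lemma X_X_apply {i j : Fin (2*n)} (hi : (i : ℕ) < n) (hj : (j : ℕ) < n)
    (hqi : q ⟨i + n, by omega⟩ = 0) (hqj : q ⟨j + n, by omega⟩ = 0) (hf : ContDiffAt ℝ 2 f q) :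
    X n L i (X n L j f) q =
      fderiv ℝ (fderiv ℝ f) q (Pi.single i.castSucc 1) (Pi.single j.castSucc 1) := by
  have hDf : DifferentiableAt ℝ (fderiv ℝ f) q :=
    (hf.fderiv_right (m := 1) (by norm_num)).differentiableAt (by simp)
  have hpderiv : ∀ k, DifferentiableAt ℝ (pderiv' k f) q := fun k =>
    hDf.clm_apply (differentiableAt_const _)
  have hXj : DifferentiableAt ℝ (X n L j f) q := by
    unfold X
    simp only [dif_pos hj]
    exact (hpderiv _).add (((differentiableAt_apply _ q).const_mul _).mul (hpderiv _))
  -- On the line `q + s • eᵢ` the coefficient `q_{j+n}` of `∂_t` in `X_j` stays `0`, as `i < j + n`.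
  rw [X_apply_of_lt hi hqi, pderiv', fderiv_apply_eq_of_eqOn_line hXj (hpderiv j.castSucc) ?line]
  · show fderiv ℝ (fun y => fderiv ℝ f y (Pi.single j.castSucc 1)) q _ = _
    rw [fderiv_clm_apply hDf (differentiableAt_const _)]
    simp
  · intro s
    refine X_apply_of_lt hj ?_
    have hne : (⟨j + n, by omega⟩ : Fin (2*n+1)) ≠ i.castSucc := by
      simp [Fin.ext_iff]; omega
    simp [hne, hqj]

lemma infLaplacian_eq_fderiv_fderiv_apply (hf : ContDiffAt ℝ 2 f q)
    (hq : ∀ i : Fin n, q ⟨i + n, by omega⟩ = 0)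
    (hgrad : ∀ k : Fin (2*n+1), n ≤ (k : ℕ) → pderiv' k f q = 0) :
    infLaplacian n L f q =
      fderiv ℝ (fderiv ℝ f) q (fun k => pderiv' k f q) (fun k => pderiv' k f q) := by
  set g : Fin (2*n+1) → ℝ := fun k => pderiv' k f q
  set D := fderiv ℝ (fderiv ℝ f) q
  have hX : ∀ j : Fin (2*n), X n L j f q = g j.castSucc := fun j =>
    X_apply_of_pderiv'_last_eq_zero j (hgrad _ (by simp; omega))
  have hterm : ∀ i j : Fin (2*n), X n L i (X n L j f) q * X n L i f q * X n L j f q =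
      D (Pi.single i.castSucc (g i.castSucc)) (Pi.single j.castSucc (g j.castSucc)) := by
    intro i j
    rw [hX i, hX j]
    by_cases hi : (i : ℕ) < n
    · by_cases hj : (j : ℕ) < n
      · have hsingle : ∀ (k : Fin (2*n+1)) (c : ℝ), Pi.single k c = c • Pi.single k (1 : ℝ) :=
          fun k c => by rw [← Pi.single_smul', smul_eq_mul, mul_one]
        rw [X_X_apply hi hj (hq ⟨i, hi⟩) (hq ⟨j, hj⟩) hf, hsingle i.castSucc (g _),
          hsingle j.castSucc (g _), map_smul, map_smul, smul_apply, smul_eq_mul, smul_eq_mul]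
        ring
      · simp [g, hgrad j.castSucc (by simpa using hj)]
    · simp [g, hgrad i.castSucc (by simpa using hi)]
  have hsum : ∑ i : Fin (2*n), Pi.single i.castSucc (g i.castSucc) = g := by
    conv_rhs => rw [← Finset.univ_sum_single g, Fin.sum_univ_castSucc]
    simp [g, hgrad (Fin.last (2*n)) (by simp; omega)]
  simp only [infLaplacian, hterm, ← map_sum, ← _root_.sum_apply, hsum]

end HeisenbergFields

section PowerProducts

lemma hasDerivAt_quadratic (a₀ a₁ a₂ s : ℝ) :
    HasDerivAt (fun r => a₀ + a₁ * r + a₂ * r ^ 2) (a₁ + 2 * a₂ * s) s := by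
  have h := (((hasDerivAt_id s).const_mul a₁).const_add a₀).add ((hasDerivAt_pow 2 s).const_mul a₂)
  refine h.congr_deriv ?_
  simp only [Nat.cast_ofNat]
  ring

variable {u v u' v' : ℝ → ℝ} {α β s : ℝ}

lemma hasDerivAt_rpow_mul_rpow {du dv : ℝ} (hu : HasDerivAt u du s) (hv : HasDerivAt v dv s)
    (hu0 : 0 < u s) (hv0 : 0 < v s) :
    HasDerivAt (fun r => u r ^ α * v r ^ β)
      (u s ^ α * v s ^ β * (α * (du / u s) + β * (dv / v s))) s := by
  refine ((hu.rpow_const (p := α) (Or.inl hu0.ne')).mul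
    (hv.rpow_const (p := β) (Or.inl hv0.ne'))).congr_deriv ?_
  rw [Real.rpow_sub_one hu0.ne', Real.rpow_sub_one hv0.ne']
  field_simp

lemma hasDerivAt_rpow_mul_rpow_mul_logDeriv {du dv : ℝ} (hu : HasDerivAt u (u' s) s)
    (hv : HasDerivAt v (v' s) s) (hu' : HasDerivAt u' du s) (hv' : HasDerivAt v' dv s)
    (hu0 : 0 < u s) (hv0 : 0 < v s) :
    HasDerivAt (fun r => u r ^ α * v r ^ β * (α * (u' r / u r) + β * (v' r / v r)))
      (u s ^ α * v s ^ β * ((α * (u' s / u s) + β * (v' s / v s)) ^ 2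
        + α * (du * u s - u' s ^ 2) / u s ^ 2 + β * (dv * v s - v' s ^ 2) / v s ^ 2)) s := by
  have h := (hasDerivAt_rpow_mul_rpow (α := α) (β := β) hu hv hu0 hv0).mul
    (((hu'.div hu hu0.ne').const_mul α).add ((hv'.div hv hv0.ne').const_mul β))
  refine h.congr_deriv ?_
  simp only [Pi.add_apply, Pi.div_apply]
  field_simp
  ring

end PowerProducts

section QuadraticProfile

variable {E : Type*} [NormedAddCommGroup E] [NormedSpace ℝ E] {f : E → ℝ} {x v : E}
  {a₀ a₁ a₂ b₀ b₁ b₂ α β : ℝ}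

lemma fderiv_apply_eq_of_line_eq_rpow_mul_rpow (hf : DifferentiableAt ℝ f x)
    (hline : ∀ s : ℝ,
      f (x + s • v) = (a₀ + a₁ * s + a₂ * s ^ 2) ^ α * (b₀ + b₁ * s + b₂ * s ^ 2) ^ β)
    (ha₀ : 0 < a₀) (hb₀ : 0 < b₀) :
    fderiv ℝ f x v = f x * (α * (a₁ / a₀) + β * (b₁ / b₀)) := by
  have h := hasDerivAt_rpow_mul_rpow (α := α) (β := β) (hasDerivAt_quadratic a₀ a₁ a₂ 0)
    (hasDerivAt_quadratic b₀ b₁ b₂ 0) (by simpa using ha₀) (by simpa using hb₀)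
  simp only [← hline] at h
  rw [(hf.hasFDerivAt.hasLineDerivAt v).unique h]
  simp

lemma fderiv_fderiv_apply_eq_of_line_eq_rpow_mul_rpow (hf : ContDiffAt ℝ 2 f x)
    (hline : ∀ s : ℝ,
      f (x + s • v) = (a₀ + a₁ * s + a₂ * s ^ 2) ^ α * (b₀ + b₁ * s + b₂ * s ^ 2) ^ β)
    (ha₀ : 0 < a₀) (hb₀ : 0 < b₀) :
    fderiv ℝ (fderiv ℝ f) x v v = f x * ((α * (a₁ / a₀) + β * (b₁ / b₀)) ^ 2
      + α * (2 * a₂ * a₀ - a₁ ^ 2) / a₀ ^ 2 + β * (2 * b₂ * b₀ - b₁ ^ 2) / b₀ ^ 2) := by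
  set U := fun r : ℝ => a₀ + a₁ * r + a₂ * r ^ 2
  set W := fun r : ℝ => b₀ + b₁ * r + b₂ * r ^ 2
  have hU : ∀ s, HasDerivAt U (a₁ + 2 * a₂ * s) s := hasDerivAt_quadratic a₀ a₁ a₂
  have hW : ∀ s, HasDerivAt W (b₁ + 2 * b₂ * s) s := hasDerivAt_quadratic b₀ b₁ b₂
  have hpos : ∀ᶠ s in 𝓝 (0 : ℝ), 0 < U s ∧ 0 < W s :=
    ((hU 0).continuousAt.eventually (lt_mem_nhds (by simpa [U] using ha₀))).and
      ((hW 0).continuousAt.eventually (lt_mem_nhds (by simpa [W] using hb₀)))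
  have h2 := hasDerivAt_rpow_mul_rpow_mul_logDeriv (α := α) (β := β)
    (u' := fun r => a₁ + 2 * a₂ * r) (v' := fun r => b₁ + 2 * b₂ * r) (hU 0) (hW 0)
    (by simpa using hasDerivAt_quadratic a₁ (2 * a₂) 0 0)
    (by simpa using hasDerivAt_quadratic b₁ (2 * b₂) 0 0)
    (by simpa [U] using ha₀) (by simpa [W] using hb₀)
  have hψ' : ∀ᶠ s in 𝓝 (0 : ℝ), HasDerivAt (fun r : ℝ => f (x + r • v))
      (U s ^ α * W s ^ β * (α * ((a₁ + 2 * a₂ * s) / U s) + β * ((b₁ + 2 * b₂ * s) / W s))) s := by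
    filter_upwards [hpos] with s hs
    simpa only [hline] using hasDerivAt_rpow_mul_rpow (hU s) (hW s) hs.1 hs.2
  have hx : f x = a₀ ^ α * b₀ ^ β := by simpa using hline 0
  rw [fderiv_fderiv_apply_eq_of_hasDerivAt hf hψ' h2, hx]
  simp [U, W]

end QuadraticProfile

section Gauge

variable {L₁ : ℝ} {q : Fin (2*2+1) → ℝ}

lemma Nfun_congr_of_sq_eq {q' : Fin (2*2+1) → ℝ} (h : ∀ i, q i ^ 2 = q' i ^ 2) :
    Nfun L₁ q = Nfun L₁ q' := by
  simp only [Nfun, Bfun, Afun, h]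

lemma Nfun_of_last_eq_zero (hq : q 4 = 0) :
    Nfun L₁ q = (Bfun L₁ q / 2) ^ ((1:ℝ)/8) * Afun L₁ q ^ ((3:ℝ)/8) := by
  have hB : 0 ≤ Bfun L₁ q := by unfold Bfun; positivity
  have hhalf : Bfun L₁ q / 2 = Bfun L₁ q ^ 2 / (Bfun L₁ q + Bfun L₁ q) := by
    rcases hB.eq_or_lt with h | h
    · simp [← h]
    · field_simp; ring
  rw [Nfun, hq, hhalf, Real.div_rpow (sq_nonneg _) (by linarith)]
  simp only [ne_eq, OfNat.ofNat_ne_zero, not_false_eq_true, zero_pow, add_zero,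
    Real.sqrt_sq hB, sub_add_cancel]
  ring

lemma contDiffAt_Nfun {n : WithTop ℕ∞} (hq : Bfun L₁ q ^ 2 + q 4 ^ 2 ≠ 0) :
    ContDiffAt ℝ n (Nfun L₁) q := by
  have hS : 0 < Real.sqrt (Bfun L₁ q ^ 2 + q 4 ^ 2) := Real.sqrt_pos.2 (by positivity)
  have hB : 0 ≤ Bfun L₁ q := by unfold Bfun; positivity
  have hAB : Bfun L₁ q ≤ Afun L₁ q := by
    unfold Afun Bfun
    exact mul_le_mul_of_nonneg_left (by nlinarith [sq_nonneg (q 0), sq_nonneg (q 2)])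
      (abs_nonneg _)
  have hB' : ContDiff ℝ n (Bfun L₁) := by unfold Bfun; fun_prop
  have hA' : ContDiff ℝ n (Afun L₁) := by unfold Afun; fun_prop
  have hR : Afun L₁ q - Bfun L₁ q + Real.sqrt (Bfun L₁ q ^ 2 + q 4 ^ 2) ≠ 0 := by
    linarith
  have hT : Bfun L₁ q + Real.sqrt (Bfun L₁ q ^ 2 + q 4 ^ 2) ≠ 0 := by linarith
  have hT' : (Bfun L₁ q + Real.sqrt (Bfun L₁ q ^ 2 + q 4 ^ 2)) ^ ((1:ℝ)/8) ≠ 0 :=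
    (Real.rpow_pos_of_pos (by linarith) _).ne'
  unfold Nfun
  fun_prop (disch := assumption)

lemma pderiv'_Nfun_eq_zero {k : Fin (2*2+1)} (hN : DifferentiableAt ℝ (Nfun L₁) q)
    (hk : q k = 0) : pderiv' k (Nfun L₁) q = 0 := by
  refine fderiv_apply_eq_zero_of_even hN fun s => Nfun_congr_of_sq_eq fun i => ?_
  rcases eq_or_ne i k with rfl | hi
  · simp [hk]
  · simp [hi]

lemma contDiffAt_Nfun_one_one (hL₁ : L₁ ≠ 0) : ContDiffAt ℝ 2 (Nfun L₁) ![1, 1, 0, 0, 0] :=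
  contDiffAt_Nfun (by simp [Bfun]; norm_num; positivity)

lemma Nfun_one_one_add_smul (v₀ v₁ s : ℝ) :
    Nfun L₁ (![1, 1, 0, 0, 0] + s • ![v₀, v₁, 0, 0, 0]) =
      (3/4 * |L₁| + (v₀/2 + v₁) * |L₁| * s + (v₀^2/4 + v₁^2/2) * |L₁| * s^2) ^ ((1:ℝ)/8) *
      (2 * |L₁| + 2 * (v₀ + v₁) * |L₁| * s + (v₀^2 + v₁^2) * |L₁| * s^2) ^ ((3:ℝ)/8) := by
  rw [Nfun_of_last_eq_zero (by simp)]
  congr 2 <;> simp [Bfun, Afun] <;> ring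

lemma fderiv_Nfun_one_one (hL₁ : L₁ ≠ 0) (v₀ v₁ : ℝ) :
    fderiv ℝ (Nfun L₁) ![1, 1, 0, 0, 0] ![v₀, v₁, 0, 0, 0] =
      Nfun L₁ ![1, 1, 0, 0, 0] * ((v₀ + 2 * v₁) / 12 + 3 * (v₀ + v₁) / 8) := by
  have hL := abs_pos.2 hL₁
  rw [fderiv_apply_eq_of_line_eq_rpow_mul_rpow
    ((contDiffAt_Nfun_one_one hL₁).differentiableAt two_ne_zero) (Nfun_one_one_add_smul v₀ v₁)
    (by positivity) (by positivity)]
  field_simp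
  ring

lemma fderiv_fderiv_Nfun_one_one (hL₁ : L₁ ≠ 0) :
    fderiv ℝ (fderiv ℝ (Nfun L₁)) ![1, 1, 0, 0, 0] ![11, 13, 0, 0, 0] ![11, 13, 0, 0, 0] =
      Nfun L₁ ![1, 1, 0, 0, 0] * (137 / 144) := by
  have hL := abs_pos.2 hL₁
  rw [fderiv_fderiv_apply_eq_of_line_eq_rpow_mul_rpow (contDiffAt_Nfun_one_one hL₁)
    (Nfun_one_one_add_smul 11 13) (by positivity) (by positivity)]
  field_simp
  ring

lemma pderiv'_Nfun_one_one (hL₁ : L₁ ≠ 0) :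
    (fun k => pderiv' k (Nfun L₁) ![1, 1, 0, 0, 0]) =
      (Nfun L₁ ![1, 1, 0, 0, 0] / 24) • ![11, 13, 0, 0, 0] := by
  have hN := (contDiffAt_Nfun_one_one hL₁).differentiableAt two_ne_zero
  funext k
  fin_cases k
  · have he : (Pi.single 0 1 : Fin (2*2+1) → ℝ) = ![1, 0, 0, 0, 0] := by
      funext i; fin_cases i <;> rfl
    change fderiv ℝ (Nfun L₁) _ (Pi.single 0 1) = _
    rw [he, fderiv_Nfun_one_one hL₁]
    simp
    ring
  · have he : (Pi.single 1 1 : Fin (2*2+1) → ℝ) = ![0, 1, 0, 0, 0] := by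
      funext i; fin_cases i <;> rfl
    change fderiv ℝ (Nfun L₁) _ (Pi.single 1 1) = _
    rw [he, fderiv_Nfun_one_one hL₁]
    simp
    ring
  all_goals simpa using pderiv'_Nfun_eq_zero hN (by simp)

end Gauge

theorem anisotropic_heisenberg_N_not_infinite_harmonic
    (L₁ : ℝ) (hL₁ : L₁ ≠ 0) (L : Fin 2 → ℝ) :
    ∃ q : Fin (2*2+1) → ℝ, q ≠ 0 ∧
      ∑ i : Fin (2*2), ∑ j : Fin (2*2),
        X 2 L i (X 2 L j (Nfun L₁)) q * X 2 L i (Nfun L₁) q * X 2 L j (Nfun L₁) q ≠ 0 := by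
  set p : Fin (2*2+1) → ℝ := ![1, 1, 0, 0, 0]
  have hgrad := pderiv'_Nfun_one_one hL₁
  have hNp : 0 < Nfun L₁ p := by
    rw [Nfun_of_last_eq_zero rfl]
    have hL := abs_pos.2 hL₁
    apply mul_pos <;> apply Real.rpow_pos_of_pos <;> simp [p, Bfun, Afun] <;> positivity
  refine ⟨p, fun h => by simpa [p] using congrFun h 0, ?_⟩
  change infLaplacian 2 L (Nfun L₁) p ≠ 0
  have hN := contDiffAt_Nfun_one_one hL₁
  rw [infLaplacian_eq_fderiv_fderiv_apply hN (fun i => by fin_cases i <;> rfl)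
    (fun k hk => pderiv'_Nfun_eq_zero (hN.differentiableAt two_ne_zero)
      (by fin_cases k <;> simp_all)),
    hgrad, map_smul, map_smul, smul_apply, fderiv_fderiv_Nfun_one_one hL₁]
  positivity
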